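/- Characterization of flat formulas: for any MT₀-formula φ, the following are equivalent: (a) φ is flat; (b) φ≡α for some classical modal formula α; (c) ¬¬φ≡φ; (d) ⊨φ⊗¬φ (where ¬φ abbreviates φ→⊥). -/

import Mathlib

/-- Classical modal formulas: α ::= p | ⊥ | ¬α | α∧α | α⊗α | α→α | □α | ◇α. -/
inductive CForm : Type where
  | var : ℕ → CForm
  | bot : CForm
  | neg : CForm → CForm
  | and : CForm → CForm → CForm
  | tensor : CForm → CForm → CForm
  | impl : CForm → CForm → CForm
  | box : CForm → CForm
  | dia : CForm → CForm

/-- Formulas of full modal downward closed team logic MT₀: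
φ ::= α | =(α₁,…,αₙ,β) | φ∧φ | φ⊗φ | φ∨φ | φ→φ | □φ | ◇φ, with α,αᵢ,β classical.
Classical formulas are embedded structurally; the primitive classical negation ¬α
is represented by the constructor `cneg`. -/
inductive MTForm : Type where
  | var : ℕ → MTForm
  | bot : MTForm
  | cneg : CForm → MTForm
  | dep : List CForm → CForm → MTForm
  | and : MTForm → MTForm → MTForm
  | tensor : MTForm → MTForm → MTForm
  | or : MTForm → MTForm → MTForm
  | impl : MTForm → MTForm → MTForm
  | box : MTForm → MTForm
  | dia : MTForm → MTForm

/-- The structural embedding of classical modal formulas into MT₀ formulas. -/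
def CForm.toMT : CForm → MTForm
  | .var p => .var p
  | .bot => .bot
  | .neg α => .cneg α
  | .and α β => .and α.toMT β.toMT
  | .tensor α β => .tensor α.toMT β.toMT
  | .impl α β => .impl α.toMT β.toMT
  | .box α => .box α.toMT
  | .dia α => .dia α.toMT

/-- A (classical modal) Kripke model M = (W,R,V) with W nonempty. -/
structure KModel where
  W : Type
  ne : Nonempty W
  R : W → W → Prop
  V : ℕ → Set W

/-- R(X) = {w : ∃ v ∈ X, vRw}. -/
def KModel.img (M : KModel) (X : Set M.W) : Set M.W := {w | ∃ v ∈ X, M.R v w}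

/-- Y is a successor team of X: Y ⊆ R(X) and Y ∩ R(w) ≠ ∅ for every w ∈ X. -/
def KModel.succT (M : KModel) (X Y : Set M.W) : Prop :=
  Y ⊆ M.img X ∧ ∀ w ∈ X, ∃ u ∈ Y, M.R w u

/-- Team semantics for classical modal formulas. -/
def KModel.csat (M : KModel) : Set M.W → CForm → Prop
  | X, .var p => X ⊆ M.V p
  | X, .bot => X = ∅
  | X, .neg α => ∀ w ∈ X, ¬ M.csat {w} α
  | X, .and α β => M.csat X α ∧ M.csat X β
  | X, .tensor α β => ∃ Y Z, X = Y ∪ Z ∧ M.csat Y α ∧ M.csat Z β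
  | X, .impl α β => ∀ Y ⊆ X, M.csat Y α → M.csat Y β
  | X, .box α => M.csat (M.img X) α
  | X, .dia α => ∃ Y, M.succT X Y ∧ M.csat Y α

/-- Team semantics for MT₀ formulas. -/
def KModel.sat (M : KModel) : Set M.W → MTForm → Prop
  | X, .var p => X ⊆ M.V p
  | X, .bot => X = ∅
  | X, .cneg α => ∀ w ∈ X, ¬ M.csat {w} α
  | X, .dep αs β => ∀ w ∈ X, ∀ u ∈ X,
      (∀ α ∈ αs, (M.csat {w} α ↔ M.csat {u} α)) → (M.csat {w} β ↔ M.csat {u} β)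
  | X, .and φ ψ => M.sat X φ ∧ M.sat X ψ
  | X, .tensor φ ψ => ∃ Y Z, X = Y ∪ Z ∧ M.sat Y φ ∧ M.sat Z ψ
  | X, .or φ ψ => M.sat X φ ∨ M.sat X ψ
  | X, .impl φ ψ => ∀ Y ⊆ X, M.sat Y φ → M.sat Y ψ
  | X, .box φ => M.sat (M.img X) φ
  | X, .dia φ => ∃ Y, M.succT X Y ∧ M.sat Y φ

/-- ⊨φ : truth on every team of every Kripke model. -/
def MTValid (φ : MTForm) : Prop := ∀ (M : KModel) (X : Set M.W), M.sat X φ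

/-- φ⊨ψ : semantic entailment. -/
def MTEntails (φ ψ : MTForm) : Prop := ∀ (M : KModel) (X : Set M.W), M.sat X φ → M.sat X ψ

/-- φ≡ψ : semantic equivalence. -/
def MTEquiv (φ ψ : MTForm) : Prop := MTEntails φ ψ ∧ MTEntails ψ φ

/-- ¬φ abbreviates φ→⊥ (MT₀-level negation). -/
def mneg (φ : MTForm) : MTForm := φ.impl .bot

/-- A formula is flat if it is satisfied by a team iff it is satisfied by every
singleton subteam. -/
def Flat (φ : MTForm) : Prop :=
  ∀ (M : KModel) (X : Set M.W), M.sat X φ ↔ ∀ w ∈ X, M.sat {w} φ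


/-!
Every MT₀-formula is equivalent to an inquisitive disjunction ⩛ᵢ αᵢ of classical formulas
(`normalForm`): ∧, ⊗, □, ◇ distribute over ⩛, an implication with classical antecedent α is
evaluated on the part of the team where α holds, and =(γ, αs, β) splits the team along γ.
A flat φ agrees on singletons, hence everywhere, with the classical ⊗ᵢ αᵢ; this is (a) ⇒ (b),
and (b) ⇒ (a) because classical formulas are flat. For (a) ⇒ (d) split a team into the points
satisfying φ and those satisfying ¬φ; for (d) ⇒ (c) note that in a split X = Y ∪ Z with Z ⊨ ¬φ,
the hypothesis X ⊨ ¬¬φ forces Z = ∅; and (c) ⇒ (a) because, by downward closure, every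
formula ¬ψ is flat.
-/

open Set

lemma Set.eq_singleton_or_eq_singleton_of_singleton_eq_union {α : Type*} {w : α} {Y Z : Set α}
    (h : {w} = Y ∪ Z) : Y = {w} ∨ Z = {w} := by
  have hw : w ∈ Y ∪ Z := h ▸ rfl
  rcases hw with hw | hw
  · exact Or.inl (Subset.antisymm (h ▸ subset_union_left) (singleton_subset_iff.mpr hw))
  · exact Or.inr (Subset.antisymm (h ▸ subset_union_right) (singleton_subset_iff.mpr hw))

namespace KModel

variable (M : KModel)

def truthSet (α : CForm) : Set M.W := {w | M.csat {w} α}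

lemma img_empty : M.img ∅ = ∅ := by simp [img]

variable {M}

lemma img_mono {X Y : Set M.W} (h : X ⊆ Y) : M.img X ⊆ M.img Y :=
  fun _ ⟨v, hv, hr⟩ => ⟨v, h hv, hr⟩

lemma csat_empty (α : CForm) : M.csat ∅ α := by
  induction α with
  | tensor α β ih₁ ih₂ => exact ⟨∅, ∅, (union_empty _).symm, ih₁, ih₂⟩
  | impl α β _ ih => intro Y hY _; rwa [subset_empty_iff.mp hY]
  | box α ih => rwa [csat, img_empty]
  | dia α ih => exact ⟨∅, ⟨empty_subset _, fun _ h => h.elim⟩, ih⟩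
  | _ => simp_all [csat]

lemma csat_iff_subset_truthSet (α : CForm) {X : Set M.W} :
    M.csat X α ↔ X ⊆ M.truthSet α := by
  induction α generalizing X with
  | var p => simp [csat, truthSet, subset_def]
  | bot =>
    change X = ∅ ↔ ∀ w ∈ X, ({w} : Set M.W) = ∅
    simp [eq_empty_iff_forall_notMem]
  | neg α => simp [csat, truthSet, subset_def]
  | and α β ih₁ ih₂ =>
    change M.csat X α ∧ M.csat X β ↔ X ⊆ M.truthSet α ∩ M.truthSet β
    rw [ih₁, ih₂, subset_inter_iff]
  | tensor α β ih₁ ih₂ =>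
    constructor
    · rintro ⟨Y, Z, rfl, hY, hZ⟩ w (hw | hw)
      · exact ⟨{w}, ∅, (union_empty _).symm, ih₁.mp hY hw, csat_empty β⟩
      · exact ⟨∅, {w}, (empty_union _).symm, csat_empty α, ih₂.mp hZ hw⟩
    · intro h
      refine ⟨X ∩ M.truthSet α, X \ M.truthSet α, (inter_union_sdiff X _).symm,
        ih₁.mpr inter_subset_right, ih₂.mpr fun w hw => ?_⟩
      obtain ⟨Y, Z, hYZ, hY, hZ⟩ := h hw.1
      rcases eq_singleton_or_eq_singleton_of_singleton_eq_union hYZ with rfl | rfl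
      · exact absurd hY hw.2
      · exact hZ
  | impl α β ih₁ ih₂ =>
    constructor
    · intro h w hw Y hYw hY
      exact h Y (hYw.trans (singleton_subset_iff.mpr hw)) hY
    · intro h Y hYX hY
      exact ih₂.mpr fun w hw => h (hYX hw) {w} subset_rfl (ih₁.mp hY hw)
  | box α ih =>
    change M.csat (M.img X) α ↔ ∀ w ∈ X, M.csat (M.img {w}) α
    simp only [ih]
    exact ⟨fun h w hw => (img_mono (singleton_subset_iff.mpr hw)).trans h,
      fun h u ⟨v, hv, hr⟩ => h v hv ⟨v, rfl, hr⟩⟩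
  | dia α ih =>
    constructor
    · rintro ⟨Y, ⟨-, hY⟩, hα⟩ w hw
      obtain ⟨u, hu, hr⟩ := hY w hw
      exact ⟨{u}, ⟨singleton_subset_iff.mpr ⟨w, rfl, hr⟩, fun v hv => ⟨u, rfl, hv ▸ hr⟩⟩,
        ih.mp hα hu⟩
    · intro h
      refine ⟨M.img X ∩ M.truthSet α, ⟨inter_subset_left, fun w hw => ?_⟩,
        ih.mpr inter_subset_right⟩
      obtain ⟨Y, ⟨-, hY⟩, hα⟩ := h hw
      obtain ⟨u, hu, hr⟩ := hY w rfl
      exact ⟨u, ⟨⟨w, hw, hr⟩, ih.mp hα hu⟩, hr⟩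

lemma csat_mono {α : CForm} {X Y : Set M.W} (h : M.csat X α) (hYX : Y ⊆ X) : M.csat Y α :=
  (csat_iff_subset_truthSet α).mpr (hYX.trans ((csat_iff_subset_truthSet α).mp h))

lemma truthSet_neg (α : CForm) : M.truthSet (.neg α) = (M.truthSet α)ᶜ := by
  ext w; simp [truthSet, csat]

lemma csat_impl_iff {α β : CForm} {X : Set M.W} :
    M.csat X (.impl α β) ↔ M.csat (X ∩ M.truthSet α) β :=
  ⟨fun h => h _ inter_subset_left ((csat_iff_subset_truthSet α).mpr inter_subset_right),
    fun h _ hYX hY => csat_mono h (subset_inter hYX ((csat_iff_subset_truthSet α).mp hY))⟩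

lemma sat_toMT (α : CForm) {X : Set M.W} : M.sat X α.toMT ↔ M.csat X α := by
  induction α generalizing X <;> simp_all [CForm.toMT, sat, csat]

lemma sat_mono {φ : MTForm} {X Y : Set M.W} (h : M.sat X φ) (hYX : Y ⊆ X) : M.sat Y φ := by
  induction φ generalizing X Y with
  | var p => exact hYX.trans h
  | bot => exact subset_empty_iff.mp (h ▸ hYX)
  | cneg α => exact fun w hw => h w (hYX hw)
  | dep αs β => exact fun w hw u hu => h w (hYX hw) u (hYX hu)
  | and φ ψ ih₁ ih₂ => exact ⟨ih₁ h.1 hYX, ih₂ h.2 hYX⟩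
  | tensor φ ψ ih₁ ih₂ =>
    obtain ⟨A, B, rfl, hA, hB⟩ := h
    exact ⟨A ∩ Y, B ∩ Y, by rw [← union_inter_distrib_right, inter_eq_self_of_subset_right hYX],
      ih₁ hA inter_subset_left, ih₂ hB inter_subset_left⟩
  | or φ ψ ih₁ ih₂ => exact h.imp (ih₁ · hYX) (ih₂ · hYX)
  | impl φ ψ => exact fun Z hZY => h Z (hZY.trans hYX)
  | box φ ih => exact ih h (img_mono hYX)
  | dia φ ih =>
    obtain ⟨Z, ⟨-, hZ⟩, hφ⟩ := h
    refine ⟨Z ∩ M.img Y, ⟨inter_subset_right, fun w hw => ?_⟩, ih hφ inter_subset_left⟩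
    obtain ⟨u, hu, hr⟩ := hZ w (hYX hw)
    exact ⟨u, ⟨hu, w, hw, hr⟩, hr⟩

lemma sat_mneg_iff {φ : MTForm} {X : Set M.W} :
    M.sat X (mneg φ) ↔ ∀ w ∈ X, ¬ M.sat {w} φ := by
  constructor
  · intro h w hw hφ
    exact singleton_ne_empty w (h {w} (singleton_subset_iff.mpr hw) hφ)
  · intro h Y hYX hY
    exact eq_empty_iff_forall_notMem.mpr fun w hw =>
      h w (hYX hw) (sat_mono hY (singleton_subset_iff.mpr hw))

end KModel

open KModel

lemma flat_of_forall_singleton {φ : MTForm}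
    (h : ∀ (M : KModel) (X : Set M.W), (∀ w ∈ X, M.sat {w} φ) → M.sat X φ) : Flat φ :=
  fun M X => ⟨fun hX _ hw => sat_mono hX (singleton_subset_iff.mpr hw), h M X⟩

lemma Flat.of_mtEquiv {φ ψ : MTForm} (hψ : Flat ψ) (h : MTEquiv φ ψ) : Flat φ :=
  flat_of_forall_singleton fun M X hX => h.2 M X ((hψ M X).mpr fun w hw => h.1 M _ (hX w hw))

lemma mtEquiv_of_flat {φ ψ : MTForm} (hφ : Flat φ) (hψ : Flat ψ)
    (h : ∀ (M : KModel) (w : M.W), M.sat {w} φ ↔ M.sat {w} ψ) : MTEquiv φ ψ :=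
  ⟨fun M X hX => (hψ M X).mpr fun w hw => (h M w).mp ((hφ M X).mp hX w hw),
    fun M X hX => (hφ M X).mpr fun w hw => (h M w).mpr ((hψ M X).mp hX w hw)⟩

lemma flat_toMT (α : CForm) : Flat α.toMT := fun _ _ => by
  simp only [sat_toMT]
  exact csat_iff_subset_truthSet α

lemma flat_mneg (φ : MTForm) : Flat (mneg φ) := fun _ _ => by
  simp [sat_mneg_iff]

lemma Flat.valid_tensor_mneg {φ : MTForm} (h : Flat φ) : MTValid (φ.tensor (mneg φ)) :=
  fun M X => ⟨X ∩ {w | M.sat {w} φ}, X \ {w | M.sat {w} φ}, (inter_union_sdiff X _).symm,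
    (h M _).mpr fun _ hw => hw.2, sat_mneg_iff.mpr fun _ hw => hw.2⟩

lemma mtEntails_mneg_mneg (φ : MTForm) : MTEntails φ (mneg (mneg φ)) := fun _ _ hX =>
  sat_mneg_iff.mpr fun _ hw hn =>
    sat_mneg_iff.mp hn _ rfl (sat_mono hX (singleton_subset_iff.mpr hw))

lemma mtEquiv_mneg_mneg_of_valid {φ : MTForm} (h : MTValid (φ.tensor (mneg φ))) :
    MTEquiv (mneg (mneg φ)) φ := by
  refine ⟨fun M X hX => ?_, mtEntails_mneg_mneg φ⟩
  obtain ⟨Y, Z, rfl, hY, hZ⟩ := h M X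
  rwa [hX Z subset_union_right hZ, union_empty]

def conjPairs (L K : List CForm) : List CForm := L.flatMap fun α => K.map α.and

def tensorPairs (L K : List CForm) : List CForm := L.flatMap fun α => K.map α.tensor

def implEach (α : CForm) (K : List CForm) : List CForm := K.map α.impl

def conjAll : List (List CForm) → List CForm
  | [] => [.impl .bot .bot]
  | L :: Ls => conjPairs L (conjAll Ls)

def depNF : List CForm → CForm → List CForm
  | [], β => [β, .neg β]
  | γ :: αs, β => conjPairs (implEach γ (depNF αs β)) (implEach (.neg γ) (depNF αs β))

def normalForm : MTForm → List CForm
  | .var p => [.var p]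
  | .bot => [.bot]
  | .cneg α => [.neg α]
  | .dep αs β => depNF αs β
  | .and φ ψ => conjPairs (normalForm φ) (normalForm ψ)
  | .tensor φ ψ => tensorPairs (normalForm φ) (normalForm ψ)
  | .or φ ψ => normalForm φ ++ normalForm ψ
  | .impl φ ψ => conjAll ((normalForm φ).map fun α => implEach α (normalForm ψ))
  | .box φ => (normalForm φ).map .box
  | .dia φ => (normalForm φ).map .dia

def tensorAll : List CForm → CForm
  | [] => .bot
  | α :: L => α.tensor (tensorAll L)

namespace KModel

variable (M : KModel)

/-- `M.satDisj X L` is `M, X ⊨ ⩛ L`: a list of classical formulas encodes their inquisitive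
disjunction. -/
def satDisj (X : Set M.W) (L : List CForm) : Prop := ∃ α ∈ L, M.csat X α

variable {M} {X : Set M.W}

lemma satDisj_conjPairs {L K : List CForm} :
    M.satDisj X (conjPairs L K) ↔ M.satDisj X L ∧ M.satDisj X K := by
  simp only [satDisj, conjPairs, List.mem_flatMap, List.mem_map]
  constructor
  · rintro ⟨-, ⟨α, hα, β, hβ, rfl⟩, hX⟩
    exact ⟨⟨α, hα, hX.1⟩, β, hβ, hX.2⟩
  · rintro ⟨⟨α, hα, hXα⟩, β, hβ, hXβ⟩
    exact ⟨α.and β, ⟨α, hα, β, hβ, rfl⟩, hXα, hXβ⟩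

lemma satDisj_tensorPairs {L K : List CForm} :
    M.satDisj X (tensorPairs L K) ↔ ∃ Y Z, X = Y ∪ Z ∧ M.satDisj Y L ∧ M.satDisj Z K := by
  simp only [satDisj, tensorPairs, List.mem_flatMap, List.mem_map]
  constructor
  · rintro ⟨-, ⟨α, hα, β, hβ, rfl⟩, Y, Z, hYZ, hY, hZ⟩
    exact ⟨Y, Z, hYZ, ⟨α, hα, hY⟩, β, hβ, hZ⟩
  · rintro ⟨Y, Z, hYZ, ⟨α, hα, hY⟩, β, hβ, hZ⟩
    exact ⟨α.tensor β, ⟨α, hα, β, hβ, rfl⟩, Y, Z, hYZ, hY, hZ⟩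

lemma satDisj_cons {α : CForm} {L : List CForm} :
    M.satDisj X (α :: L) ↔ M.csat X α ∨ M.satDisj X L := by
  simp [satDisj]

lemma satDisj_append {L K : List CForm} :
    M.satDisj X (L ++ K) ↔ M.satDisj X L ∨ M.satDisj X K := by
  simp [satDisj, or_and_right, exists_or]

lemma satDisj_conjAll {Ls : List (List CForm)} :
    M.satDisj X (conjAll Ls) ↔ ∀ L ∈ Ls, M.satDisj X L := by
  induction Ls with
  | nil => simp [satDisj, conjAll, csat]
  | cons L Ls ih => simp [conjAll, satDisj_conjPairs, ih]

lemma satDisj_implEach {α : CForm} {K : List CForm} :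
    M.satDisj X (implEach α K) ↔ M.satDisj (X ∩ M.truthSet α) K := by
  simp [satDisj, implEach, csat_impl_iff]

lemma sat_dep_nil_iff {β : CForm} : M.sat X (.dep [] β) ↔ M.csat X β ∨ M.csat X (.neg β) := by
  rw [csat_iff_subset_truthSet, csat_iff_subset_truthSet, truthSet_neg]
  simp only [sat, List.not_mem_nil, IsEmpty.forall_iff, implies_true, forall_const]
  constructor
  · intro h
    refine or_iff_not_imp_right.mpr fun hβ => ?_
    obtain ⟨w, hw, hwβ⟩ := not_subset.mp hβ
    exact fun u hu => (h w hw u hu).mp (not_not.mp hwβ)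
  · rintro (h | h) w hw u hu
    · exact iff_of_true (h hw) (h hu)
    · exact iff_of_false (h hw) (h hu)

lemma sat_dep_cons_iff {γ β : CForm} {αs : List CForm} :
    M.sat X (.dep (γ :: αs) β) ↔
      M.sat (X ∩ M.truthSet γ) (.dep αs β) ∧ M.sat (X \ M.truthSet γ) (.dep αs β) := by
  simp only [sat, List.forall_mem_cons]
  constructor
  · intro h
    exact ⟨fun w hw u hu hαs => h w hw.1 u hu.1 ⟨iff_of_true hw.2 hu.2, hαs⟩,
      fun w hw u hu hαs => h w hw.1 u hu.1 ⟨iff_of_false hw.2 hu.2, hαs⟩⟩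
  · rintro ⟨hpos, hneg⟩ w hw u hu ⟨hγ, hαs⟩
    by_cases hwγ : M.csat {w} γ
    · exact hpos w ⟨hw, hwγ⟩ u ⟨hu, hγ.mp hwγ⟩ hαs
    · exact hneg w ⟨hw, hwγ⟩ u ⟨hu, mt hγ.mpr hwγ⟩ hαs

lemma satDisj_depNF {αs : List CForm} {β : CForm} :
    M.satDisj X (depNF αs β) ↔ M.sat X (.dep αs β) := by
  induction αs generalizing X with
  | nil => simp [depNF, satDisj, sat_dep_nil_iff]
  | cons γ αs ih =>
    rw [depNF, satDisj_conjPairs, satDisj_implEach, satDisj_implEach, truthSet_neg, ← sdiff_eq,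
      ih, ih, sat_dep_cons_iff]

lemma sat_impl_iff_of_sat_iff_satDisj {φ ψ : MTForm} {L : List CForm}
    (hφ : ∀ {Y : Set M.W}, M.sat Y φ ↔ M.satDisj Y L) :
    M.sat X (φ.impl ψ) ↔ ∀ α ∈ L, M.sat (X ∩ M.truthSet α) ψ := by
  constructor
  · intro h α hα
    exact h _ inter_subset_left
      (hφ.mpr ⟨α, hα, (csat_iff_subset_truthSet α).mpr inter_subset_right⟩)
  · intro h Y hYX hY
    obtain ⟨α, hα, hYα⟩ := hφ.mp hY
    exact sat_mono (h α hα) (subset_inter hYX ((csat_iff_subset_truthSet α).mp hYα))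

lemma sat_iff_satDisj_normalForm {φ : MTForm} : M.sat X φ ↔ M.satDisj X (normalForm φ) := by
  induction φ generalizing X with
  | dep αs β => exact satDisj_depNF.symm
  | and φ ψ ih₁ ih₂ => simp only [sat, normalForm, satDisj_conjPairs, ih₁, ih₂]
  | tensor φ ψ ih₁ ih₂ => simp only [sat, normalForm, satDisj_tensorPairs, ih₁, ih₂]
  | or φ ψ ih₁ ih₂ => simp only [sat, normalForm, satDisj_append, ih₁, ih₂]
  | impl φ ψ ih₁ ih₂ =>
    simp [sat_impl_iff_of_sat_iff_satDisj ih₁, normalForm, satDisj_conjAll, satDisj_implEach, ih₂]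
  | box φ ih => simp [sat, normalForm, satDisj, csat, ih]
  | dia φ ih =>
    simp only [sat, ih, satDisj, normalForm, List.mem_map, exists_exists_and_eq_and, csat]
    constructor
    · rintro ⟨Y, hXY, α, hα, hY⟩
      exact ⟨α, hα, Y, hXY, hY⟩
    · rintro ⟨α, hα, Y, hXY, hY⟩
      exact ⟨Y, hXY, α, hα, hY⟩
  | _ => simp [sat, normalForm, satDisj, csat]

lemma csat_singleton_tensorAll {w : M.W} {L : List CForm} :
    M.csat {w} (tensorAll L) ↔ M.satDisj {w} L := by
  induction L with
  | nil => simp [tensorAll, csat, satDisj]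
  | cons α L ih =>
    rw [tensorAll, csat, satDisj_cons]
    constructor
    · rintro ⟨Y, Z, hYZ, hY, hZ⟩
      rcases eq_singleton_or_eq_singleton_of_singleton_eq_union hYZ with rfl | rfl
      · exact Or.inl hY
      · exact Or.inr (ih.mp hZ)
    · rintro (h | h)
      · exact ⟨{w}, ∅, (union_empty _).symm, h, csat_empty _⟩
      · exact ⟨∅, {w}, (empty_union _).symm, csat_empty _, ih.mpr h⟩

end KModel

lemma Flat.exists_mtEquiv_toMT {φ : MTForm} (h : Flat φ) : ∃ α : CForm, MTEquiv φ α.toMT :=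
  ⟨tensorAll (normalForm φ), mtEquiv_of_flat h (flat_toMT _) fun _ _ => by
    rw [sat_toMT, csat_singleton_tensorAll, sat_iff_satDisj_normalForm]⟩

/-- STATEMENT 13: Characterization of flat formulas: (a) φ is flat; (b) φ≡α for some
classical modal formula α; (c) ¬¬φ≡φ; (d) ⊨φ⊗¬φ are all equivalent. -/
theorem flat_characterization (φ : MTForm) :
    List.TFAE [Flat φ,
      ∃ α : CForm, MTEquiv φ α.toMT,
      MTEquiv (mneg (mneg φ)) φ,
      MTValid (φ.tensor (mneg φ))] := by
  tfae_have 1 → 2 := Flat.exists_mtEquiv_toMT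
  tfae_have 2 → 1 := fun ⟨α, h⟩ => (flat_toMT α).of_mtEquiv h
  tfae_have 1 → 4 := Flat.valid_tensor_mneg
  tfae_have 4 → 3 := mtEquiv_mneg_mneg_of_valid
  tfae_have 3 → 1 := fun h => (flat_mneg (mneg φ)).of_mtEquiv ⟨h.2, h.1⟩
  tfae_finish
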